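/- arXiv:2208.08522 — 4 statements merged into one kernel-verified Lean document; each statement's English description precedes it below -/
import Mathlib

section
/- Let G be a directed Eulerian graph (without parallel edges or self-loops), and let (u,v),(v,w) be edges of G such that (u,v,w) appears in some Eulerian circuit of G. If d(v) = 1, or if d(v) = 2 and v is a cut node of U(G), then (u,v,w) appears in every Eulerian circuit of G. -/
/-! The edge that follows `(u, v)` in an Eulerian circuit is its successor in the duplicate-free
cyclic list of edges, so it leaves `v`; if `d(v) = 1` it must be `(v, w)`. If `d(v) = 2`, a circuit
passes through `v` twice and splits into two closed walks at `v`, each of which stays connected in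
`U(G) - v`, and together they meet every node. If the circuit contains `(u, v, w)`, then `u` ends
one walk and `w` begins the other, so every node other than `v` is joined to `u` or to `w` in
`U(G) - v`. If it does not, `u` ends and `w` begins the same walk, so `u` and `w` are joined. The
given circuit and a circuit avoiding `(u, v, w)` would thus make `U(G) - v` connected. -/

/-- The underlying undirected simple graph of a directed graph `E` (no self-loops). -/
def underlyingUG {V : Type*} (E : V → V → Prop) : SimpleGraph V where
  Adj a b := a ≠ b ∧ (E a b ∨ E b a)
  symm := ⟨fun a b h => ⟨h.1.symm, h.2.symm⟩⟩
  loopless := ⟨fun a h => h.1 rfl⟩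

/-- Out-degree of `v`: number of out-neighbors. -/
noncomputable def outdeg {V : Type*} (E : V → V → Prop) (v : V) : ℕ := Set.ncard {w | E v w}

/-- In-degree of `v`: number of in-neighbors. -/
noncomputable def indeg {V : Type*} (E : V → V → Prop) (v : V) : ℕ := Set.ncard {u | E u v}

/-- The cyclic sequence of consecutive pairs of a circuit given as a vertex list. -/
def cyclicPairs {V : Type*} (c : List V) : List (V × V) := c.zip (c.rotate 1)

/-- `c` is an Eulerian circuit: a nonempty closed walk using every edge exactly once. -/
def IsEulerianCircuit {V : Type*} (E : V → V → Prop) (c : List V) : Prop :=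
  c ≠ [] ∧ (cyclicPairs c).Nodup ∧ ∀ p : V × V, p ∈ cyclicPairs c ↔ E p.1 p.2

/-- The walk `q` appears (cyclically, as consecutive edges) in the circuit `c`. -/
def Appears {V : Type*} (q c : List V) : Prop :=
  ∃ k, (q.zip q.tail) <:+: cyclicPairs (c.rotate k)

/-- `v` is a cut node of the connected undirected graph `H`. -/
def IsCutNode {V : Type*} (H : SimpleGraph V) (v : V) : Prop :=
  ¬ (H.induce {u | u ≠ v}).Connected

/-- The underlying undirected graph with node `v` (and incident edges) removed. -/
def delNode {V : Type*} (E : V → V → Prop) (v : V) := (underlyingUG E).induce {u | u ≠ v}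

namespace List

variable {α : Type*}

theorem exists_isInfix_rotate_iff_isRotated (q l : List α) :
    (∃ k, q <:+: l.rotate k) ↔ ∃ r, l ~r q ++ r := by
  constructor
  · rintro ⟨k, s, t, hst⟩
    refine ⟨t ++ s, ((IsRotated.forall l k).symm.trans ?_)⟩
    rw [← hst, append_assoc, ← append_assoc q]
    exact isRotated_append
  · rintro ⟨r, k, hk⟩
    exact ⟨k, hk ▸ (prefix_append q r).isInfix⟩

theorem exists_isRotated_cons_append_cons_of_count_eq_two [DecidableEq α] {l : List α} {v : α}
    (h : l.count v = 2) : ∃ B A, l ~r v :: B ++ v :: A ∧ v ∉ B ∧ v ∉ A := by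
  obtain ⟨s, t, rfl⟩ := append_of_mem (count_pos_iff.mp (by omega : 0 < l.count v))
  have hts : (t ++ s).count v = 1 := by
    simp only [count_append, count_cons_self] at h ⊢; omega
  obtain ⟨B, A, hBA⟩ := append_of_mem (count_pos_iff.mp (by omega : 0 < (t ++ s).count v))
  rw [hBA, count_append, count_cons_self] at hts
  refine ⟨B, A, ?_, fun hB => ?_, fun hA => ?_⟩
  · simpa [hBA] using (isRotated_append : s ++ v :: t ~r (v :: t) ++ s)
  · have := count_pos_iff.mpr hB; omega
  · have := count_pos_iff.mpr hA; omega

end List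

theorem SimpleGraph.reachable_of_isChain {V : Type*} {G : SimpleGraph V} {l : List V}
    (hl : l.IsChain G.Adj) {x y : V} (hx : x ∈ l) (hy : y ∈ l) : G.Reachable x y := by
  have hne := List.ne_nil_of_mem hx
  have hhead : ∀ z ∈ l, G.Reachable (l.head hne) z :=
    List.IsChain.induction _ l hl (fun _ _ hab h => h.trans hab.reachable) (fun _ => .rfl)
  exact (hhead x hx).symm.trans (hhead y hy)

section

variable {V : Type*}

theorem cyclicPairs_rotate (c : List V) (k : ℕ) :
    cyclicPairs (c.rotate k) = (cyclicPairs c).rotate k := by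
  rw [cyclicPairs, cyclicPairs, List.zip, List.zipWith_rotate_distrib _ _ _ _ (by simp),
    List.rotate_rotate, List.rotate_rotate, Nat.add_comm]

theorem List.IsRotated.cyclicPairs {c c' : List V} (h : c ~r c') :
    cyclicPairs c ~r cyclicPairs c' := by
  obtain ⟨k, rfl⟩ := h
  rw [cyclicPairs_rotate]
  exact ⟨k, rfl⟩

theorem length_cyclicPairs (c : List V) : (cyclicPairs c).length = c.length := by
  simp [cyclicPairs]

theorem cyclicPairs_cons (x : V) (l : List V) :
    cyclicPairs (x :: l) = (x :: l).zip (l ++ [x]) := by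
  simp [cyclicPairs]

theorem cyclicPairs_cons_append_cons (v : V) (l₁ l₂ : List V) :
    cyclicPairs (v :: l₁ ++ v :: l₂) = cyclicPairs (v :: l₁) ++ cyclicPairs (v :: l₂) := by
  rw [List.cons_append, cyclicPairs_cons, cyclicPairs_cons, cyclicPairs_cons,
    ← List.zip_append (by simp)]
  simp

theorem cyclicPairs_cons_eq_cons (v : V) {l : List V} (hl : l ≠ []) :
    cyclicPairs (v :: l) = (v, l.head hl) :: l.zip (l.tail ++ [v]) := by
  obtain ⟨b, l, rfl⟩ := List.exists_cons_of_ne_nil hl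
  simp [cyclicPairs_cons]

theorem cyclicPairs_cons_eq_append (v : V) {l : List V} (hl : l ≠ []) :
    cyclicPairs (v :: l) = (v :: l.dropLast).zip l ++ [(l.getLast hl, v)] := by
  rw [cyclicPairs_cons]
  conv_lhs => arg 1; rw [← List.dropLast_append_getLast hl, ← List.cons_append]
  rw [List.zip_append (by simp [Nat.sub_add_cancel (List.length_pos_iff.mpr hl)])]
  simp

theorem mem_of_mem_cyclicPairs {c : List V} {x y : V} (h : (x, y) ∈ cyclicPairs c) :
    x ∈ c ∧ y ∈ c :=
  (List.of_mem_zip h).imp_right List.mem_rotate.mp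

theorem eq_getLast_of_mem_cyclicPairs_cons {v : V} {l : List V} (hv : v ∉ l) (hl : l ≠ [])
    {x : V} (h : (x, v) ∈ cyclicPairs (v :: l)) : x = l.getLast hl := by
  rw [cyclicPairs_cons_eq_append v hl, List.mem_append, List.mem_singleton] at h
  rcases h with h | h
  · exact absurd (List.of_mem_zip h).2 hv
  · exact (Prod.mk.inj h).1

theorem eq_head_of_mem_cyclicPairs_cons {v : V} {l : List V} (hv : v ∉ l) (hl : l ≠ [])
    {y : V} (h : (v, y) ∈ cyclicPairs (v :: l)) : y = l.head hl := by
  rw [cyclicPairs_cons_eq_cons v hl, List.mem_cons] at h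
  rcases h with h | h
  · exact (Prod.mk.inj h).2
  · exact absurd (List.of_mem_zip h).1 hv

theorem isChain_of_forall_mem_cyclicPairs_cons {v : V} {l : List V} {R : V → V → Prop}
    (h : ∀ p ∈ cyclicPairs (v :: l), R p.1 p.2) : l.IsChain R := by
  have hwalk : (v :: l ++ [v]).IsChain R :=
    List.isChain_cons_append_singleton_iff_forall₂.mpr <| List.forall₂_iff_zip.mpr
      ⟨by simp, fun hab => h _ (cyclicPairs_cons v l ▸ hab)⟩
  exact hwalk.infix ⟨[v], [v], by simp⟩

theorem appears_iff {q c : List V} :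
    Appears q c ↔ ∃ r, cyclicPairs c ~r q.zip q.tail ++ r := by
  simp only [Appears, cyclicPairs_rotate]
  exact List.exists_isInfix_rotate_iff_isRotated _ _

theorem appears_iff_of_isRotated {q c c' : List V} (h : c ~r c') :
    Appears q c ↔ Appears q c' := by
  simp only [appears_iff]
  exact exists_congr fun r => ⟨h.cyclicPairs.symm.trans, h.cyclicPairs.trans⟩

theorem fst_next_cyclicPairs [DecidableEq V] {c : List V} (hnd : (cyclicPairs c).Nodup)
    {p : V × V} (hp : p ∈ cyclicPairs c) : ((cyclicPairs c).next p hp).1 = p.2 := by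
  obtain ⟨i, hi, rfl⟩ := List.getElem_of_mem hp
  rw [List.next_getElem _ hnd]
  simp [cyclicPairs, List.getElem_rotate]

theorem next_cyclicPairs_of_appears [DecidableEq V] {c : List V} (hnd : (cyclicPairs c).Nodup)
    {x y z : V} (hp : (x, y) ∈ cyclicPairs c) (h : Appears [x, y, z] c) :
    (cyclicPairs c).next (x, y) hp = (y, z) := by
  obtain ⟨r, hr⟩ := appears_iff.mp h
  rw [List.isRotated_next_eq hr hnd]
  exact List.next_cons_cons_eq ..

theorem appears_next_cyclicPairs [DecidableEq V] {c : List V} (hnd : (cyclicPairs c).Nodup)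
    {x y : V} (hxy : x ≠ y) (hp : (x, y) ∈ cyclicPairs c) :
    Appears [x, y, ((cyclicPairs c).next (x, y) hp).2] c := by
  obtain ⟨s, t, hst⟩ := List.append_of_mem hp
  have hrot : cyclicPairs c ~r (x, y) :: (t ++ s) := by
    rw [hst]; exact List.isRotated_append
  rcases hts : t ++ s with _ | ⟨⟨y', z⟩, r⟩
  · obtain ⟨rfl, rfl⟩ := List.append_eq_nil_iff.mp hts
    obtain ⟨a, rfl⟩ : ∃ a, c = [a] := by
      rw [← List.length_eq_one_iff, ← length_cyclicPairs, hst]; rfl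
    simp [cyclicPairs] at hst
    exact absurd (hst.1.symm.trans hst.2) hxy
  · rw [hts] at hrot
    have hq : (cyclicPairs c).next (x, y) hp = (y', z) := by
      rw [List.isRotated_next_eq hrot hnd]; exact List.next_cons_cons_eq ..
    have hy' : y' = y := by simpa [hq] using fst_next_cyclicPairs hnd hp
    subst hy'
    rw [hq]
    exact appears_iff.mpr ⟨r, hrot⟩

theorem appears_getLast_head {v : V} {B A : List V} (hB : B ≠ []) (hA : A ≠ []) :
    Appears [B.getLast hB, v, A.head hA] (v :: B ++ v :: A) := by
  refine ⟨0, ?_⟩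
  rw [List.rotate_zero, cyclicPairs_cons_append_cons, cyclicPairs_cons_eq_append v hB,
    cyclicPairs_cons_eq_cons v hA]
  exact ⟨(v :: B.dropLast).zip B, A.zip (A.tail ++ [v]), by simp⟩

theorem reachable_delNode_of_isChain {E : V → V → Prop} (hloop : ∀ x, ¬ E x x) {v : V}
    {l : List V} (hl : l.IsChain E) (hv : v ∉ l) {x y : V} (hx : x ∈ l) (hy : y ∈ l) :
    (delNode E v).Reachable ⟨x, ne_of_mem_of_not_mem hx hv⟩
      ⟨y, ne_of_mem_of_not_mem hy hv⟩ := by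
  have hne : ∀ z ∈ l, z ≠ v := fun _ hz => ne_of_mem_of_not_mem hz hv
  refine SimpleGraph.reachable_of_isChain (l := l.attachWith _ hne) ?_
    ((List.mem_attachWith _ _).mpr hx) ((List.mem_attachWith _ _).mpr hy)
  refine List.isChain_attachWith hne |>.mpr (hl.imp_of_mem_imp fun a b ha hb hab => ?_)
  exact ⟨hne a ha, hne b hb, show a ≠ b ∧ _ from ⟨fun h => hloop a (h ▸ hab), Or.inl hab⟩⟩

namespace IsEulerianCircuit

variable {E : V → V → Prop} {c : List V} {u v w : V} {B A : List V}

theorem of_isRotated {c' : List V} (hc : IsEulerianCircuit E c) (h : c ~r c') :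
    IsEulerianCircuit E c' := by
  obtain ⟨k, rfl⟩ := h
  obtain ⟨hne, hnd, hmem⟩ := hc
  refine ⟨by simpa using hne, ?_, fun p => ?_⟩
  · rwa [cyclicPairs_rotate, List.nodup_rotate]
  · rw [cyclicPairs_rotate, List.mem_rotate]; exact hmem p

theorem mem_of_connected (hc : IsEulerianCircuit E c) (hconn : (underlyingUG E).Connected)
    {x y : V} (hxy : x ≠ y) : x ∈ c := by
  obtain ⟨p⟩ := hconn.preconnected x y
  cases p with
  | nil => exact absurd rfl hxy
  | cons hadj _ =>
    rcases hadj.2 with h | h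
    · exact (mem_of_mem_cyclicPairs ((hc.2.2 (_, _)).mpr h)).1
    · exact (mem_of_mem_cyclicPairs ((hc.2.2 (_, _)).mpr h)).2

theorem count_eq_outdeg [DecidableEq V] (hc : IsEulerianCircuit E c) (x : V) :
    c.count x = outdeg E x := by
  set P := (cyclicPairs c).filter (·.1 = x)
  have hedges : {y | E x y} = Prod.mk x ⁻¹' (P.toFinset : Set (V × V)) := by
    ext y; simp [P, hc.2.2]
  have hcount : c.count x = P.length := by
    rw [← List.countP_eq_length_filter]
    conv_lhs => rw [← List.map_fst_zip (l₁ := c) (l₂ := c.rotate 1) (by simp)]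
    rw [List.count_eq_countP, List.countP_map]
    rfl
  rw [outdeg, hedges, Set.ncard_preimage_of_injective_subset_range (Prod.mk_right_injective x),
    Set.ncard_coe_finset, List.toFinset_card_of_nodup (hc.2.1.filter _), hcount]
  intro p hp
  exact ⟨p.2, Prod.ext (by simp [P] at hp; exact hp.2.symm) rfl⟩

theorem appears_unique (hc : IsEulerianCircuit E c) {x y z z' : V} (h : Appears [x, y, z] c)
    (h' : Appears [x, y, z'] c) : z = z' := by
  classical
  obtain ⟨r, hr⟩ := appears_iff.mp h
  have hp : (x, y) ∈ cyclicPairs c := hr.mem_iff.mpr (by simp)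
  have := (next_cyclicPairs_of_appears hc.2.1 hp h).symm.trans
    (next_cyclicPairs_of_appears hc.2.1 hp h')
  simpa using this

theorem exists_appears (hc : IsEulerianCircuit E c) {x y : V} (hxy : E x y) (hne : x ≠ y) :
    ∃ z, E y z ∧ Appears [x, y, z] c := by
  classical
  have hp := (hc.2.2 (x, y)).mpr hxy
  refine ⟨_, ?_, appears_next_cyclicPairs hc.2.1 hne hp⟩
  have := (hc.2.2 _).mp (List.next_mem _ _ hp)
  rwa [fst_next_cyclicPairs hc.2.1 hp] at this

theorem swap (hc : IsEulerianCircuit E (v :: B ++ v :: A)) :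
    IsEulerianCircuit E (v :: A ++ v :: B) :=
  hc.of_isRotated List.isRotated_append

theorem edge_of_mem_left (hc : IsEulerianCircuit E (v :: B ++ v :: A)) {p : V × V}
    (hp : p ∈ cyclicPairs (v :: B)) : E p.1 p.2 := by
  refine (hc.2.2 p).mp ?_
  rw [cyclicPairs_cons_append_cons]
  exact List.mem_append_left _ hp

theorem edge_iff_of_split (hc : IsEulerianCircuit E (v :: B ++ v :: A)) {x y : V} :
    E x y ↔ (x, y) ∈ cyclicPairs (v :: B) ∨ (x, y) ∈ cyclicPairs (v :: A) := by
  rw [← List.mem_append, ← cyclicPairs_cons_append_cons]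
  exact (hc.2.2 (x, y)).symm

theorem left_ne_nil (hloop : ∀ x, ¬ E x x) (hc : IsEulerianCircuit E (v :: B ++ v :: A)) :
    B ≠ [] := by
  rintro rfl
  exact hloop v (hc.edge_of_mem_left (p := (v, v)) (by simp [cyclicPairs]))

theorem isChain_left (hc : IsEulerianCircuit E (v :: B ++ v :: A)) : B.IsChain E :=
  isChain_of_forall_mem_cyclicPairs_cons fun _ => hc.edge_of_mem_left

theorem eq_getLast_of_edge (hc : IsEulerianCircuit E (v :: B ++ v :: A)) (hvB : v ∉ B)
    (hvA : v ∉ A) (hB : B ≠ []) (hA : A ≠ []) {x : V} (hx : E x v) :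
    x = B.getLast hB ∨ x = A.getLast hA :=
  (hc.edge_iff_of_split.mp hx).imp (eq_getLast_of_mem_cyclicPairs_cons hvB hB)
    (eq_getLast_of_mem_cyclicPairs_cons hvA hA)

theorem eq_head_of_edge (hc : IsEulerianCircuit E (v :: B ++ v :: A)) (hvB : v ∉ B)
    (hvA : v ∉ A) (hB : B ≠ []) (hA : A ≠ []) {y : V} (hy : E v y) :
    y = B.head hB ∨ y = A.head hA :=
  (hc.edge_iff_of_split.mp hy).imp (eq_head_of_mem_cyclicPairs_cons hvB hB)
    (eq_head_of_mem_cyclicPairs_cons hvA hA)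

-- Swapping the two closed walks at `v` is a rotation, so `u` may be taken to close the first.
theorem exists_split [DecidableEq V] (hloop : ∀ x, ¬ E x x) (hc : IsEulerianCircuit E c)
    (hcount : c.count v = 2) (huv : E u v) :
    ∃ B A, ∃ hB : B ≠ [], c ~r v :: B ++ v :: A ∧ v ∉ B ∧ v ∉ A ∧ u = B.getLast hB := by
  obtain ⟨B, A, hrot, hvB, hvA⟩ := List.exists_isRotated_cons_append_cons_of_count_eq_two hcount
  have hc' := hc.of_isRotated hrot
  have hB := hc'.left_ne_nil hloop
  have hA := hc'.swap.left_ne_nil hloop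
  rcases hc'.eq_getLast_of_edge hvB hvA hB hA huv with hu | hu
  · exact ⟨B, A, hB, hrot, hvB, hvA, hu⟩
  · exact ⟨A, B, hA, hrot.trans List.isRotated_append, hvA, hvB, hu⟩

theorem reachable_of_appears [DecidableEq V] (hloop : ∀ x, ¬ E x x)
    (hc : IsEulerianCircuit E c)
    (hcount : c.count v = 2) (huv : E u v) (h : Appears [u, v, w] c) (hu : u ≠ v) (hw : w ≠ v)
    (x : {x // x ≠ v}) (hx : x.1 ∈ c) :
    (delNode E v).Reachable x ⟨u, hu⟩ ∨ (delNode E v).Reachable x ⟨w, hw⟩ := by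
  obtain ⟨B, A, hB, hrot, hvB, hvA, rfl⟩ := hc.exists_split hloop hcount huv
  have hc' := hc.of_isRotated hrot
  have hA := hc'.swap.left_ne_nil hloop
  obtain rfl : w = A.head hA :=
    hc'.appears_unique ((appears_iff_of_isRotated hrot).mp h) (appears_getLast_head hB hA)
  have hxBA : x.1 ∈ B ∨ x.1 ∈ A := by
    simpa [hrot.mem_iff, x.2] using hx
  rcases hxBA with hxB | hxA
  · exact .inl (reachable_delNode_of_isChain hloop hc'.isChain_left hvB hxB (B.getLast_mem hB))
  · exact .inr
      (reachable_delNode_of_isChain hloop hc'.swap.isChain_left hvA hxA (A.head_mem hA))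

theorem reachable_of_not_appears [DecidableEq V] (hloop : ∀ x, ¬ E x x)
    (hc : IsEulerianCircuit E c) (hcount : c.count v = 2) (huv : E u v) (hvw : E v w)
    (h : ¬ Appears [u, v, w] c) (hu : u ≠ v) (hw : w ≠ v) :
    (delNode E v).Reachable ⟨u, hu⟩ ⟨w, hw⟩ := by
  obtain ⟨B, A, hB, hrot, hvB, hvA, rfl⟩ := hc.exists_split hloop hcount huv
  have hc' := hc.of_isRotated hrot
  have hA := hc'.swap.left_ne_nil hloop
  obtain rfl : w = B.head hB := by
    refine (hc'.eq_head_of_edge hvB hvA hB hA hvw).resolve_right fun hwA => h ?_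
    exact (appears_iff_of_isRotated hrot).mpr (hwA ▸ appears_getLast_head hB hA)
  exact reachable_delNode_of_isChain hloop hc'.isChain_left hvB (B.getLast_mem hB)
    (B.head_mem hB)

end IsEulerianCircuit

end

theorem deg_or_cut_implies_safe_general {V : Type*} (E : V → V → Prop)
    (hloop : ∀ x : V, ¬ E x x) (hconn : (underlyingUG E).Connected)
    (u v w : V) (huv : E u v) (hvw : E v w)
    (hone : ∃ c : List V, IsEulerianCircuit E c ∧ Appears [u, v, w] c)
    (hA : outdeg E v = 1 ∨ (outdeg E v = 2 ∧ IsCutNode (underlyingUG E) v)) :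
    ∀ c : List V, IsEulerianCircuit E c → Appears [u, v, w] c := by
  classical
  intro c hc
  have hu : u ≠ v := fun h => hloop v (h ▸ huv)
  have hw : w ≠ v := fun h => hloop v (h ▸ hvw)
  rcases hA with hdeg | ⟨hdeg, hcut⟩
  · obtain ⟨z, hvz, hz⟩ := hc.exists_appears huv hu
    obtain ⟨a, ha⟩ := Set.ncard_eq_one.mp hdeg
    have hout : ∀ y, E v y → y = a := fun y hy => by
      simpa [ha] using (show y ∈ {y | E v y} from hy)
    rwa [hout w hvw, ← hout z hvz]
  · by_contra hnot
    obtain ⟨c₀, hc₀, happ⟩ := hone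
    have hcount : ∀ {d}, IsEulerianCircuit E d → d.count v = 2 :=
      fun hd => (hd.count_eq_outdeg v).trans hdeg
    have huw := hc.reachable_of_not_appears hloop (hcount hc) huv hvw hnot hu hw
    refine hcut <|
      (SimpleGraph.connected_iff_exists_forall_reachable _).mpr ⟨⟨u, hu⟩, fun x => ?_⟩
    rcases hc₀.reachable_of_appears hloop (hcount hc₀) huv happ hu hw x
      (hc₀.mem_of_connected hconn x.2) with hxu | hxw
    · exact hxu.symm
    · exact huw.trans hxw.symm

/-- If `(u,v,w)` appears in some Eulerian circuit and `d(v) = 1`, or `d(v) = 2` and `v`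
is a cut node of `U(G)`, then `(u,v,w)` appears in every Eulerian circuit of `G`. -/
theorem deg_or_cut_implies_safe {V : Type*} [Fintype V] (E : V → V → Prop)
    (hloop : ∀ x : V, ¬ E x x) (hconn : (underlyingUG E).Connected)
    (u v w : V) (huv : E u v) (hvw : E v w)
    (hone : ∃ c : List V, IsEulerianCircuit E c ∧ Appears [u, v, w] c)
    (hA : outdeg E v = 1 ∨ (outdeg E v = 2 ∧ IsCutNode (underlyingUG E) v)) :
    ∀ c : List V, IsEulerianCircuit E c → Appears [u, v, w] c :=
  deg_or_cut_implies_safe_general E hloop hconn u v w huv hvw hone hA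
end

section
/- Let G be a directed Eulerian graph without parallel edges or self-loops, and let v be a node with d(v) = 2 that is a cut node of U(G). Then U(G) \ v has exactly two connected components K1 and K2, and v has exactly one in-neighbor and exactly one out-neighbor in each of K1 and K2. -/
/-!
An Eulerian circuit enters a vertex set as often as it leaves it, so in a connected Eulerian
digraph every proper nonempty vertex set has both an outgoing and an incoming edge. Applied to
a component `K` of `U(G) \ v`, all these edges pass through `v`: `v` has an in-neighbor and an
out-neighbor in every component. With only two in-neighbors and at least two components (`v` is
a cut node), the components are exactly two and each contains one in- and one out-neighbor.
-/

theorem List.countP_leave_eq_countP_enter_of_perm {α : Type*} {L : List (α × α)}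
    (hL : (L.map Prod.fst).Perm (L.map Prod.snd)) (p : α → Bool) :
    L.countP (fun e => p e.1 && !p e.2) = L.countP (fun e => !p e.1 && p e.2) := by
  have hsrc := L.countP_eq_countP_filter_add (fun e => p e.1) (fun e => p e.2)
  have htgt := L.countP_eq_countP_filter_add (fun e => p e.2) (fun e => p e.1)
  have hbal : L.countP (fun e => p e.1) = L.countP (fun e => p e.2) := by
    have := hL.countP_eq p
    rwa [List.countP_map, List.countP_map] at this
  simp only [List.countP_filter, Bool.and_comm (p (Prod.snd _))] at hsrc htgt
  omega

theorem perm_map_fst_map_snd_cyclicPairs {α : Type*} (c : List α) :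
    ((cyclicPairs c).map Prod.fst).Perm ((cyclicPairs c).map Prod.snd) := by
  rw [cyclicPairs, List.map_fst_zip (by simp), List.map_snd_zip (by simp)]
  exact (c.rotate_perm 1).symm

theorem existsUnique_of_existsUnique_subtype {α : Type*} {p : α → Prop} {P : Subtype p → Prop}
    (h : ∃! x : Subtype p, P x) : ∃! x : α, ∃ hx : p x, P ⟨x, hx⟩ := by
  obtain ⟨⟨x, hx⟩, hPx, huniq⟩ := h
  exact ⟨x, ⟨hx, hPx⟩, fun y ⟨hy, hPy⟩ => congrArg Subtype.val (huniq ⟨y, hy⟩ hPy)⟩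

theorem Set.exists_pair_and_existsUnique_of_ncard_eq_two {α β : Type*} [Nontrivial β]
    {N : Set α} {f : α → β} (hN : N.ncard = 2) (hf : ∀ b, ∃ a ∈ N, f a = b) :
    (∃ b₁ b₂ : β, b₁ ≠ b₂ ∧ ∀ b, b = b₁ ∨ b = b₂) ∧ ∀ b, ∃! a, a ∈ N ∧ f a = b := by
  obtain ⟨a₁, a₂, -, rfl⟩ := Set.ncard_eq_two.mp hN
  have hcover : ∀ b, b = f a₁ ∨ b = f a₂ := by
    intro b
    obtain ⟨a, rfl | rfl, rfl⟩ := hf b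
    exacts [Or.inl rfl, Or.inr rfl]
  have hne : f a₁ ≠ f a₂ := by
    intro h
    obtain ⟨b, b', hbb'⟩ := exists_pair_ne β
    rcases hcover b with rfl | rfl <;> rcases hcover b' with rfl | rfl <;> simp_all
  refine ⟨⟨_, _, hne, hcover⟩, fun b => ?_⟩
  obtain ⟨a, ha, rfl⟩ := hf b
  refine ⟨a, ⟨ha, rfl⟩, fun a' ⟨ha', hfa'⟩ => ?_⟩
  rcases ha with rfl | rfl <;> rcases ha' with rfl | rfl <;> simp_all

theorem SimpleGraph.nontrivial_connectedComponent_of_not_connected {V : Type*} [Nonempty V]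
    {G : SimpleGraph V} (h : ¬ G.Connected) : Nontrivial G.ConnectedComponent := by
  by_contra hsub
  rw [not_nontrivial_iff_subsingleton] at hsub
  exact h ⟨fun x y => SimpleGraph.ConnectedComponent.exact (Subsingleton.elim _ _)⟩

section Eulerian

variable {V : Type*} {E : V → V → Prop}

theorem IsEulerianCircuit.exists_leave_iff_exists_enter {c : List V}
    (hc : IsEulerianCircuit E c) (S : Set V) :
    (∃ x y, E x y ∧ x ∈ S ∧ y ∉ S) ↔ ∃ x y, E x y ∧ x ∉ S ∧ y ∈ S := by
  classical
  have hcount := List.countP_leave_eq_countP_enter_of_perm (perm_map_fst_map_snd_cyclicPairs c)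
    (fun x => decide (x ∈ S))
  have hmem : ∀ x y, E x y ↔ (x, y) ∈ cyclicPairs c := fun x y => (hc.2.2 (x, y)).symm
  simpa [List.countP_pos_iff, hmem] using congrArg (0 < ·) hcount

theorem exists_leave_or_enter_of_connected (hconn : (underlyingUG E).Connected) {S : Set V}
    {x y : V} (hx : x ∈ S) (hy : y ∉ S) :
    (∃ a b, E a b ∧ a ∈ S ∧ b ∉ S) ∨ ∃ a b, E a b ∧ a ∉ S ∧ b ∈ S := by
  obtain ⟨d, -, hd₁, hd₂⟩ := (hconn.preconnected x y).some.exists_boundary_dart S hx hy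
  rcases d.adj.2 with h | h
  exacts [Or.inl ⟨_, _, h, hd₁, hd₂⟩, Or.inr ⟨_, _, h, hd₂, hd₁⟩]

theorem IsEulerianCircuit.exists_leave_and_exists_enter {c : List V} (hc : IsEulerianCircuit E c)
    (hconn : (underlyingUG E).Connected) {S : Set V} {x y : V} (hx : x ∈ S) (hy : y ∉ S) :
    (∃ a b, E a b ∧ a ∈ S ∧ b ∉ S) ∧ ∃ a b, E a b ∧ a ∉ S ∧ b ∈ S := by
  have hbal := hc.exists_leave_iff_exists_enter S
  rcases exists_leave_or_enter_of_connected hconn hx hy with h | h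
  exacts [⟨h, hbal.mp h⟩, ⟨hbal.mpr h, h⟩]

theorem IsEulerianCircuit.exists_inNbr_and_outNbr_in_component {c : List V}
    (hc : IsEulerianCircuit E c) (hconn : (underlyingUG E).Connected) {v : V}
    (K : (delNode E v).ConnectedComponent) :
    (∃ u : {u | u ≠ v}, E u v ∧ (delNode E v).connectedComponentMk u = K) ∧
      ∃ w : {u | u ≠ v}, E v w ∧ (delNode E v).connectedComponentMk w = K := by
  set S : Set V := Subtype.val '' K.supp
  have hvS : v ∉ S := by
    rintro ⟨u, -, hu⟩
    exact u.2 hu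
  have hexit : ∀ a b, E a b ∨ E b a → a ∈ S → b ∉ S → b = v := by
    rintro a b hab ⟨a', ha', rfl⟩ hb
    by_contra hbv
    have hadj : (delNode E v).Adj a' ⟨b, hbv⟩ := ⟨fun h => hb ⟨a', ha', h⟩, hab⟩
    exact hb ⟨_, (K.mem_supp_congr_adj hadj).mp ha', rfl⟩
  obtain ⟨x, hx⟩ := K.nonempty_supp
  obtain ⟨⟨a, b, hab, haS, hbS⟩, ⟨a', b', hab', haS', hbS'⟩⟩ :=
    hc.exists_leave_and_exists_enter hconn (S := S) ⟨x, hx, rfl⟩ hvS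
  obtain rfl := hexit a b (Or.inl hab) haS hbS
  obtain rfl := hexit b' a' (Or.inr hab') hbS' haS'
  obtain ⟨u, hu, rfl⟩ := haS
  obtain ⟨w, hw, rfl⟩ := hbS'
  exact ⟨⟨u, hab, hu⟩, ⟨w, hab', hw⟩⟩

end Eulerian

theorem cut_degree_two_components_general {V : Type*} (E : V → V → Prop)
    (hloop : ∀ x : V, ¬ E x x) (hconn : (underlyingUG E).Connected)
    (heul : ∃ c : List V, IsEulerianCircuit E c)
    (v : V) (hdout : outdeg E v = 2) (hdin : indeg E v = 2)
    (hcut : IsCutNode (underlyingUG E) v) :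
    ∃ K1 K2 : (delNode E v).ConnectedComponent, K1 ≠ K2 ∧
      (∀ K : (delNode E v).ConnectedComponent, K = K1 ∨ K = K2) ∧
      (∀ K : (delNode E v).ConnectedComponent,
        (∃! u : V, ∃ h : u ≠ v, E u v ∧ (delNode E v).connectedComponentMk ⟨u, h⟩ = K) ∧
        (∃! w : V, ∃ h : w ≠ v, E v w ∧ (delNode E v).connectedComponentMk ⟨w, h⟩ = K)) := by
  obtain ⟨c, hc⟩ := heul
  have hdel : ∀ s : Set V, v ∉ s → (Subtype.val ⁻¹' s : Set {u | u ≠ v}).ncard = s.ncard :=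
    fun s hs => Set.ncard_preimage_of_injective_subset_range Subtype.val_injective
      fun u hu => ⟨⟨u, fun h => hs (h ▸ hu)⟩, rfl⟩
  have hin : (Subtype.val ⁻¹' {u | E u v} : Set {u | u ≠ v}).ncard = 2 :=
    (hdel {u | E u v} (hloop v)).trans hdin
  have hout : (Subtype.val ⁻¹' {w | E v w} : Set {u | u ≠ v}).ncard = 2 :=
    (hdel {w | E v w} (hloop v)).trans hdout
  have : Nonempty {u | u ≠ v} := ⟨(Set.nonempty_of_ncard_ne_zero (hin.trans_ne two_ne_zero)).some⟩
  have := SimpleGraph.nontrivial_connectedComponent_of_not_connected (G := delNode E v) hcut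
  have hnbr := hc.exists_inNbr_and_outNbr_in_component hconn (v := v)
  obtain ⟨⟨K₁, K₂, hne, hcover⟩, hinK⟩ :=
    Set.exists_pair_and_existsUnique_of_ncard_eq_two hin fun K => (hnbr K).1
  obtain ⟨-, houtK⟩ := Set.exists_pair_and_existsUnique_of_ncard_eq_two hout fun K => (hnbr K).2
  exact ⟨K₁, K₂, hne, hcover, fun K => ⟨existsUnique_of_existsUnique_subtype (hinK K),
    existsUnique_of_existsUnique_subtype (houtK K)⟩⟩

/-- If `d(v) = 2` and `v` is a cut node of `U(G)`, then `U(G) \ v` has exactly two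
connected components, and `v` has exactly one in-neighbor and exactly one
out-neighbor in each of them. -/
theorem cut_degree_two_components {V : Type*} [Fintype V] (E : V → V → Prop)
    (hloop : ∀ x : V, ¬ E x x) (hconn : (underlyingUG E).Connected)
    (heul : ∃ c : List V, IsEulerianCircuit E c)
    (v : V) (hdout : outdeg E v = 2) (hdin : indeg E v = 2)
    (hcut : IsCutNode (underlyingUG E) v) :
    ∃ K1 K2 : (delNode E v).ConnectedComponent, K1 ≠ K2 ∧
      (∀ K : (delNode E v).ConnectedComponent, K = K1 ∨ K = K2) ∧
      (∀ K : (delNode E v).ConnectedComponent,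
        (∃! u : V, ∃ h : u ≠ v, E u v ∧ (delNode E v).connectedComponentMk ⟨u, h⟩ = K) ∧
        (∃! w : V, ∃ h : w ≠ v, E v w ∧ (delNode E v).connectedComponentMk ⟨w, h⟩ = K)) :=
  cut_degree_two_components_general E hloop hconn heul v hdout hdin hcut
end

section
/- Let G be a directed Eulerian graph without parallel edges or self-loops, let v be a node with d(v) = 2 that is a cut node of U(G), and let K1, K2 be the two connected components of U(G) \ v. In any Eulerian circuit of G, whenever the circuit reaches v via its in-neighbor lying in K_t (t ∈ {1,2}), the circuit must leave v via its out-neighbor lying in K_{3−t}. -/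
/-!
Rotate the circuit so that it starts with the edge `(v, w)` and ends with `(u, v)`. As `v` has
in-degree 2 it occurs exactly twice, so the circuit reads `v A v B` with `A` starting at `w`,
`B` ending at `u`, and neither containing `v`. Each of `A`, `B` is a walk in `U(G) \ v`, hence
lies in a single component. Every node other than `v` is incident to an edge, so it lies on `A`
or on `B`; if `A` and `B` lay in the same component, `U(G) \ v` would have only one component.
-/

namespace List

variable {α β : Type*}

theorem zip_rotate {l : List α} {l' : List β} (h : l.length = l'.length) (k : ℕ) :
    (l.zip l').rotate k = (l.rotate k).zip (l'.rotate k) := by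
  apply ext_getElem
  · simp [h]
  · intro i _ _
    simp only [getElem_rotate, getElem_zip, length_zip, h, Nat.min_self]

theorem ncard_setOf_mem_eq_count_map_snd [DecidableEq β] {P : List (α × β)} (hP : P.Nodup)
    (b : β) : {a | (a, b) ∈ P}.ncard = (P.map Prod.snd).count b := by
  induction P with
  | nil => simp
  | cons p P ih =>
    obtain ⟨hpP, hP⟩ := nodup_cons.mp hP
    by_cases hpb : p.2 = b
    · subst hpb
      have hins : {a | (a, p.2) ∈ p :: P} = insert p.1 {a | (a, p.2) ∈ P} := by
        ext a; simp [Prod.ext_iff, and_comm]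
      have hfin : {a | (a, p.2) ∈ P}.Finite :=
        (P.map Prod.fst).finite_toSet.subset fun a ha => mem_map.mpr ⟨_, ha, rfl⟩
      have hp : p.1 ∉ {a | (a, p.2) ∈ P} := by simpa using hpP
      rw [hins, Set.ncard_insert_of_notMem hp hfin, ih hP, map_cons, count_cons_self]
    · have hsame : {a | (a, b) ∈ p :: P} = {a | (a, b) ∈ P} := by
        ext a
        simp only [Set.mem_ofPred_eq, mem_cons, or_iff_right_iff_imp]
        rintro rfl
        exact absurd rfl hpb
      rw [hsame, ih hP, map_cons, count_cons_of_ne hpb]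

end List

section CyclicPairs

variable {V : Type*}

theorem map_fst_cyclicPairs (c : List V) : (cyclicPairs c).map Prod.fst = c :=
  List.map_fst_zip (by simp)

theorem map_snd_cyclicPairs (c : List V) : (cyclicPairs c).map Prod.snd = c.rotate 1 :=
  List.map_snd_zip (by simp)

end CyclicPairs

namespace IsEulerianCircuit

variable {V : Type*} {E : V → V → Prop} {l : List V}

theorem rotate (hl : IsEulerianCircuit E l) (k : ℕ) : IsEulerianCircuit E (l.rotate k) := by
  obtain ⟨hne, hnodup, hmem⟩ := hl
  refine ⟨by simpa using hne, ?_, fun p => ?_⟩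
  · rw [cyclicPairs_rotate]; exact List.nodup_rotate.mpr hnodup
  · rw [cyclicPairs_rotate, List.mem_rotate]; exact hmem p

theorem isChain (hl : IsEulerianCircuit E l) : l.IsChain E := by
  refine List.isChain_iff_getElem.mpr fun i hi => (hl.2.2 (l[i], l[i + 1])).mp ?_
  have hlen : i < (cyclicPairs l).length := by simp only [cyclicPairs, List.length_zip, List.length_rotate, min_self]; omega
  have hi' : (cyclicPairs l)[i] = (l[i], l[i + 1]) := by
    simp [cyclicPairs, List.getElem_rotate, Nat.mod_eq_of_lt hi]
  exact hi' ▸ List.getElem_mem hlen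

theorem mem_of_adj (hl : IsEulerianCircuit E l) {x y : V} (h : (underlyingUG E).Adj x y) :
    x ∈ l := by
  rcases h.2 with hxy | hyx
  · exact (List.of_mem_zip ((hl.2.2 (x, y)).mpr hxy)).1
  · exact List.mem_rotate.mp (List.of_mem_zip ((hl.2.2 (y, x)).mpr hyx)).2

theorem count_eq_indeg [DecidableEq V] (hl : IsEulerianCircuit E l) (v : V) :
    l.count v = indeg E v := by
  have hin : {u | E u v} = {u | (u, v) ∈ cyclicPairs l} := by
    ext u; exact (hl.2.2 (u, v)).symm
  rw [indeg, hin, List.ncard_setOf_mem_eq_count_map_snd hl.2.1, map_snd_cyclicPairs,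
    (List.rotate_perm l 1).count_eq]

theorem exists_cons_cons_of_appears (hl : IsEulerianCircuit E l) {u v w : V}
    (h : Appears [u, v, w] l) :
    ∃ m, IsEulerianCircuit E (v :: w :: m) ∧ (w :: m).getLast (List.cons_ne_nil w m) = u := by
  obtain ⟨k, pre, post, hk⟩ := h
  change pre ++ [(u, v), (v, w)] ++ post = _ at hk
  have hl₀ := hl.rotate (k + (pre.length + 1))
  have hpairs : cyclicPairs (l.rotate (k + (pre.length + 1))) =
      (v, w) :: ((post ++ pre) ++ [(u, v)]) := by
    rw [← List.rotate_rotate, cyclicPairs_rotate, ← hk,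
      show pre ++ [(u, v), (v, w)] ++ post = (pre ++ [(u, v)]) ++ ((v, w) :: post) by simp,
      show pre.length + 1 = (pre ++ [(u, v)]).length by simp, List.rotate_append_length_eq]
    simp
  generalize l.rotate (k + (pre.length + 1)) = c₀ at hl₀ hpairs
  obtain ⟨a, m₀, rfl⟩ := List.exists_cons_of_ne_nil hl₀.1
  have hfst := map_fst_cyclicPairs (a :: m₀)
  have hsnd := map_snd_cyclicPairs (a :: m₀)
  rw [hpairs] at hfst hsnd
  simp only [List.map_cons, List.map_append, List.map_nil, List.cons.injEq,
    List.rotate_cons_succ, List.rotate_zero] at hfst hsnd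
  obtain ⟨rfl, hm₀⟩ := hfst
  obtain rfl : m₀ = w :: (post ++ pre).map Prod.snd :=
    List.append_cancel_right (hsnd.symm.trans (by simp))
  exact ⟨_, hl₀, by simp only [← hm₀, List.getLast_concat]⟩

theorem exists_split_of_appears (hl : IsEulerianCircuit E l) {u v w : V} (hdin : indeg E v = 2)
    (hu : u ≠ v) (hw : w ≠ v) (h : Appears [u, v, w] l) :
    ∃ A B, IsEulerianCircuit E (v :: A ++ v :: B) ∧ v ∉ A ∧ v ∉ B ∧ w ∈ A ∧ u ∈ B := by
  classical
  obtain ⟨m, hl₀, hlast⟩ := hl.exists_cons_cons_of_appears h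
  have hcount : (w :: m).count v = 1 := by
    have := hl₀.count_eq_indeg v
    rw [hdin, List.count_cons_self] at this
    omega
  have hv : v ∈ w :: m := List.count_pos_iff.mp (by omega)
  obtain ⟨A, B, hAB⟩ := List.append_of_mem hv
  rw [hAB, List.count_append, List.count_cons_self] at hcount
  have hvA : v ∉ A := List.count_eq_zero.mp (by omega)
  have hvB : v ∉ B := List.count_eq_zero.mp (by omega)
  refine ⟨A, B, by rwa [List.cons_append, ← hAB], hvA, hvB, ?_, ?_⟩
  · cases A with
    | nil => exact absurd (List.cons.inj hAB).1 hw
    | cons a A => exact (List.cons.inj hAB).1 ▸ List.mem_cons_self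
  · have hlast' : (v :: B).getLast (List.cons_ne_nil v B) = u := by
      rw [← List.getLast_append_of_ne_nil (l := A) (by simp)]
      simpa only [hAB] using hlast
    cases B with
    | nil => exact absurd hlast'.symm hu
    | cons b B =>
      rw [List.getLast_cons_cons] at hlast'
      exact hlast' ▸ List.getLast_mem _

end IsEulerianCircuit

namespace SimpleGraph

variable {V : Type*} {G : SimpleGraph V}

theorem Connected.exists_adj (hG : G.Connected) {x v : V} (hxv : x ≠ v) : ∃ y, G.Adj x y :=
  ⟨_, Walk.adj_snd (Walk.not_nil_of_ne (p := (hG.preconnected x v).some) hxv)⟩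

theorem connectedComponentMk_eq_of_isChain {l : List V} (hl : l.IsChain G.Adj) {x y : V}
    (hx : x ∈ l) (hy : y ∈ l) : G.connectedComponentMk x = G.connectedComponentMk y := by
  have hne : l ≠ [] := List.ne_nil_of_mem hx
  have hhead : ∀ z ∈ l, G.connectedComponentMk z = G.connectedComponentMk (l.head hne) :=
    hl.induction _ _
      (fun _ _ hab ha => (ConnectedComponent.connectedComponentMk_eq_of_adj hab).symm.trans ha)
      (fun _ => rfl)
  exact (hhead x hx).trans (hhead y hy).symm

theorem induce_connectedComponentMk_eq_of_isChain {s : Set V} {l : List V}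
    (hl : l.IsChain G.Adj) (hs : ∀ x ∈ l, x ∈ s) {x y : V} (hx : x ∈ l) (hy : y ∈ l) :
    (G.induce s).connectedComponentMk ⟨x, hs x hx⟩ =
      (G.induce s).connectedComponentMk ⟨y, hs y hy⟩ :=
  connectedComponentMk_eq_of_isChain (G := G.induce s)
    (List.isChain_pmap_of_isChain (f := Subtype.mk) (fun _ _ _ _ h => h) hl hs)
    (List.mem_pmap.mpr ⟨x, hx, rfl⟩) (List.mem_pmap.mpr ⟨y, hy, rfl⟩)

end SimpleGraph

theorem delNode_connectedComponentMk_eq_of_isChain {V : Type*} {E : V → V → Prop}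
    (hloop : ∀ x : V, ¬ E x x) {v : V} {l : List V} (hl : l.IsChain E) (hv : v ∉ l) {x y : V}
    (hx : x ∈ l) (hy : y ∈ l) :
    (delNode E v).connectedComponentMk ⟨x, ne_of_mem_of_not_mem hx hv⟩ =
      (delNode E v).connectedComponentMk ⟨y, ne_of_mem_of_not_mem hy hv⟩ :=
  SimpleGraph.induce_connectedComponentMk_eq_of_isChain (G := underlyingUG E)
    (hl.imp fun a _ hab => ⟨by rintro rfl; exact hloop a hab, Or.inl hab⟩)
    (fun _ hz => ne_of_mem_of_not_mem hz hv) hx hy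

theorem circuit_crosses_cut_node_general {V : Type*} (E : V → V → Prop)
    (hloop : ∀ x : V, ¬ E x x) (hconn : (underlyingUG E).Connected)
    (v : V) (hdin : indeg E v = 2)
    (K1 K2 : (delNode E v).ConnectedComponent) (hK : K1 ≠ K2)
    (hall : ∀ K : (delNode E v).ConnectedComponent, K = K1 ∨ K = K2) :
    ∀ c : List V, IsEulerianCircuit E c →
      ∀ (u w : V) (hu : u ≠ v) (hw : w ≠ v), E u v → E v w → Appears [u, v, w] c →
        ((delNode E v).connectedComponentMk ⟨u, hu⟩ = K1 →
            (delNode E v).connectedComponentMk ⟨w, hw⟩ = K2) ∧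
        ((delNode E v).connectedComponentMk ⟨u, hu⟩ = K2 →
            (delNode E v).connectedComponentMk ⟨w, hw⟩ = K1) := by
  intro c hc u w hu hw _ _ happ
  obtain ⟨A, B, hAB, hvA, hvB, hwA, huB⟩ := hc.exists_split_of_appears hdin hu hw happ
  have hsplit : ∀ x, x ≠ v → x ∈ A ∨ x ∈ B := fun x hx => by
    obtain ⟨y, hxy⟩ := hconn.exists_adj hx
    simpa [hx] using hAB.mem_of_adj hxy
  have hcross : (delNode E v).connectedComponentMk ⟨u, hu⟩ ≠
      (delNode E v).connectedComponentMk ⟨w, hw⟩ := by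
    intro huw
    have hone : ∀ K, K = (delNode E v).connectedComponentMk ⟨w, hw⟩ := by
      refine SimpleGraph.ConnectedComponent.ind fun ⟨x, hx⟩ => ?_
      rcases hsplit x hx with hxA | hxB
      · exact delNode_connectedComponentMk_eq_of_isChain hloop
          hAB.isChain.left_of_append.tail hvA hxA hwA
      · exact (delNode_connectedComponentMk_eq_of_isChain hloop
          hAB.isChain.right_of_append.tail hvB hxB huB).trans huw
    exact hK ((hone K1).trans (hone K2).symm)
  exact ⟨fun h => (hall _).resolve_left fun h' => hcross (h.trans h'.symm),
    fun h => (hall _).resolve_right fun h' => hcross (h.trans h'.symm)⟩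

/-- If `d(v) = 2` and `v` is a cut node whose removal leaves the two components `K1, K2`,
then any Eulerian circuit entering `v` from a node of one component leaves `v` into the
other component. -/
theorem circuit_crosses_cut_node {V : Type*} [Fintype V] (E : V → V → Prop)
    (hloop : ∀ x : V, ¬ E x x) (hconn : (underlyingUG E).Connected)
    (v : V) (hdout : outdeg E v = 2) (hdin : indeg E v = 2)
    (hcut : IsCutNode (underlyingUG E) v)
    (K1 K2 : (delNode E v).ConnectedComponent) (hK : K1 ≠ K2)
    (hall : ∀ K : (delNode E v).ConnectedComponent, K = K1 ∨ K = K2) :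
    ∀ c : List V, IsEulerianCircuit E c →
      ∀ (u w : V) (hu : u ≠ v) (hw : w ≠ v), E u v → E v w → Appears [u, v, w] c →
        ((delNode E v).connectedComponentMk ⟨u, hu⟩ = K1 →
            (delNode E v).connectedComponentMk ⟨w, hw⟩ = K2) ∧
        ((delNode E v).connectedComponentMk ⟨u, hu⟩ = K2 →
            (delNode E v).connectedComponentMk ⟨w, hw⟩ = K1) :=
  circuit_crosses_cut_node_general E hloop hconn v hdin K1 K2 hK hall
end

section
/- Let G be a directed Eulerian graph without parallel edges or self-loops, let v be a node with in-neighbors u1, u2 and out-neighbors w1, w2 (d(v) = 2) that is not a cut node of U(G). Let G' be obtained from G by deleting v and its incident edges and adding new nodes v1, v2 with edges (u1,v1), (v1,w2), (u2,v2), (v2,w1). Then G' is Eulerian, and every Eulerian circuit of G' yields an Eulerian circuit of G by replacing each traversal of (u_i, v_i', w_j) with (u_i, v, w_j). -/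
/-- The modified graph `G'` of Case 2: delete `v`, add new nodes `v1, v2` and the
length-two paths `(u1, v1, w2)` and `(u2, v2, w1)`. `Sum.inr false` is `v1`,
`Sum.inr true` is `v2`. -/
def modifiedRel {V : Type*} (E : V → V → Prop) (v u1 u2 w1 w2 : V) :
    ({x : V // x ≠ v} ⊕ Bool) → ({x : V // x ≠ v} ⊕ Bool) → Prop
  | Sum.inl a, Sum.inl b => E a.1 b.1
  | Sum.inl a, Sum.inr false => a.1 = u1
  | Sum.inl a, Sum.inr true => a.1 = u2
  | Sum.inr false, Sum.inl b => b.1 = w2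
  | Sum.inr true, Sum.inl b => b.1 = w1
  | Sum.inr _, Sum.inr _ => False

/-- Projection from `G'` back to `G`, sending both `v1` and `v2` to `v`. -/
def modifiedProj {V : Type*} (v : V) : ({x : V // x ≠ v} ⊕ Bool) → V
  | Sum.inl a => a.1
  | Sum.inr _ => v

section Eulerian

variable {α β : Type*}

theorem List.Nodup.ncard_setOf_pair_mem_eq_countP [DecidableEq α] {l : List (α × α)}
    (hl : l.Nodup) (x : α) : {w | (x, w) ∈ l}.ncard = l.countP (fun p => p.1 = x) := by
  set s : Finset (α × α) := (l.filter (fun p => p.1 = x)).toFinset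
  have hs : {w | (x, w) ∈ l} = Prod.snd '' (s : Set (α × α)) := by
    ext w
    simp [s]
  have hinj : Set.InjOn Prod.snd (s : Set (α × α)) := by
    intro p hp q hq h
    simp only [s, Finset.mem_coe, List.mem_toFinset, List.mem_filter, decide_eq_true_eq] at hp hq
    exact Prod.ext (hp.2.trans hq.2.symm) h
  rw [hs, hinj.ncard_image, Set.ncard_coe_finset, List.toFinset_card_of_nodup (hl.filter _),
    List.countP_eq_length_filter]

theorem countP_fst_cyclicPairs [DecidableEq α] (c : List α) (x : α) :
    (cyclicPairs c).countP (fun p => p.1 = x) = c.count x := by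
  conv_rhs => rw [← List.map_fst_zip (l₁ := c) (l₂ := c.rotate 1) (by simp)]
  simp only [cyclicPairs, List.count_eq_countP, List.countP_map, Function.comp_def]
  rfl

theorem countP_snd_cyclicPairs [DecidableEq α] (c : List α) (x : α) :
    (cyclicPairs c).countP (fun p => p.2 = x) = c.count x := by
  rw [← (List.rotate_perm c 1).count_eq x]
  conv_rhs => rw [← List.map_snd_zip (l₁ := c) (l₂ := c.rotate 1) (by simp)]
  simp only [cyclicPairs, List.count_eq_countP, List.countP_map, Function.comp_def]
  rfl

theorem IsEulerianCircuit.indeg_eq_outdeg {E : α → α → Prop} {c : List α}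
    (hc : IsEulerianCircuit E c) (x : α) : indeg E x = outdeg E x := by
  classical
  obtain ⟨-, hnd, hmem⟩ := hc
  have hin : {u | E u x} = {u | (x, u) ∈ (cyclicPairs c).map Prod.swap} := by
    ext u
    simp [hmem]
  have hout : {w | E x w} = {w | (x, w) ∈ cyclicPairs c} := by
    ext w
    exact (hmem (x, w)).symm
  rw [indeg, outdeg, hin, hout, (hnd.map Prod.swap_injective).ncard_setOf_pair_mem_eq_countP,
    hnd.ncard_setOf_pair_mem_eq_countP, List.countP_map]
  simpa [Function.comp_def] using
    (countP_snd_cyclicPairs c x).trans (countP_fst_cyclicPairs c x).symm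

theorem cyclicPairs_map (f : α → β) (c : List α) :
    cyclicPairs (c.map f) = (cyclicPairs c).map (Prod.map f f) := by
  rw [cyclicPairs, cyclicPairs, ← List.map_rotate, List.zip_map]

variable {E' : α → α → Prop} {E : β → β → Prop} {f : α → β}

theorem IsEulerianCircuit.map (hf : Set.BijOn (Prod.map f f) {p | E' p.1 p.2} {p | E p.1 p.2})
    {c : List α} (hc : IsEulerianCircuit E' c) : IsEulerianCircuit E (c.map f) := by
  obtain ⟨hne, hnd, hmem⟩ := hc
  refine ⟨by simpa using hne, ?_, fun p => ?_⟩
  · rw [cyclicPairs_map]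
    exact hnd.map_on fun p hp q hq => hf.injOn ((hmem p).1 hp) ((hmem q).1 hq)
  · rw [cyclicPairs_map, List.mem_map]
    constructor
    · rintro ⟨q, hq, rfl⟩
      exact hf.mapsTo ((hmem q).1 hq)
    · intro hp
      obtain ⟨q, hq, rfl⟩ := hf.surjOn hp
      exact ⟨q, (hmem q).2 hq, rfl⟩

theorem indeg_eq_of_bijOn (hf : Set.BijOn (Prod.map f f) {p | E' p.1 p.2} {p | E p.1 p.2})
    {a : α} (ha : ∀ b, f b = f a → b = a) : indeg E' a = indeg E (f a) := by
  have himage : f '' {y | E' y a} = {u | E u (f a)} := by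
    ext u
    constructor
    · rintro ⟨y, hy, rfl⟩
      exact hf.mapsTo (x := (y, a)) hy
    · intro hu
      obtain ⟨⟨y, b⟩, hyb, he⟩ := hf.surjOn (show (u, f a) ∈ {p | E p.1 p.2} from hu)
      obtain ⟨rfl, hb⟩ := Prod.ext_iff.1 he
      obtain rfl := ha b hb
      exact ⟨y, hyb, rfl⟩
  rw [indeg, indeg, ← himage, Set.InjOn.ncard_image]
  intro y hy z hz h
  exact congrArg Prod.fst (hf.injOn (x₁ := (y, a)) (x₂ := (z, a)) hy hz (Prod.ext h rfl))

theorem outdeg_eq_of_bijOn (hf : Set.BijOn (Prod.map f f) {p | E' p.1 p.2} {p | E p.1 p.2})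
    {a : α} (ha : ∀ b, f b = f a → b = a) : outdeg E' a = outdeg E (f a) := by
  have himage : f '' {y | E' a y} = {w | E (f a) w} := by
    ext w
    constructor
    · rintro ⟨y, hy, rfl⟩
      exact hf.mapsTo (x := (a, y)) hy
    · intro hw
      obtain ⟨⟨b, y⟩, hby, he⟩ := hf.surjOn (show (f a, w) ∈ {p | E p.1 p.2} from hw)
      obtain ⟨hb, rfl⟩ := Prod.ext_iff.1 he
      obtain rfl := ha b hb
      exact ⟨y, hby, rfl⟩
  rw [outdeg, outdeg, ← himage, Set.InjOn.ncard_image]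
  intro y hy z hz h
  exact congrArg Prod.snd (hf.injOn (x₁ := (a, y)) (x₂ := (a, z)) hy hz (Prod.ext rfl h))

end Eulerian

section Modified

variable {V : Type*} {E : V → V → Prop} {v u1 u2 w1 w2 : V}

theorem mapsTo_modifiedProj (hin : ∀ x, E x v ↔ x = u1 ∨ x = u2)
    (hout : ∀ x, E v x ↔ x = w1 ∨ x = w2) :
    Set.MapsTo (Prod.map (modifiedProj v) (modifiedProj v))
      {p | modifiedRel E v u1 u2 w1 w2 p.1 p.2} {p | E p.1 p.2} := by
  rintro ⟨a | (_ | _), b | (_ | _)⟩ h <;> simp_all [modifiedRel, modifiedProj]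

theorem injOn_modifiedProj (hu12 : u1 ≠ u2) (hw12 : w1 ≠ w2) :
    Set.InjOn (Prod.map (modifiedProj v) (modifiedProj v))
      {p | modifiedRel E v u1 u2 w1 w2 p.1 p.2} := by
  rintro ⟨⟨a, ha⟩ | (_ | _), ⟨b, hb⟩ | (_ | _)⟩ h
    ⟨⟨a', ha'⟩ | (_ | _), ⟨b', hb'⟩ | (_ | _)⟩ h' he <;>
    simp only [modifiedRel, modifiedProj, Prod.map, Prod.mk.injEq] at h h' he ⊢ <;> grind

theorem surjOn_modifiedProj (hv : ¬ E v v) (hin : ∀ x, E x v ↔ x = u1 ∨ x = u2)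
    (hout : ∀ x, E v x ↔ x = w1 ∨ x = w2) :
    Set.SurjOn (Prod.map (modifiedProj v) (modifiedProj v))
      {p | modifiedRel E v u1 u2 w1 w2 p.1 p.2} {p | E p.1 p.2} := by
  rintro ⟨x, y⟩ (h : E x y)
  by_cases hx : x = v
  · subst x
    have hy : y ≠ v := by rintro rfl; exact hv h
    rcases (hout y).1 h with rfl | rfl
    · exact ⟨(Sum.inr true, Sum.inl ⟨_, hy⟩), rfl, rfl⟩
    · exact ⟨(Sum.inr false, Sum.inl ⟨_, hy⟩), rfl, rfl⟩
  by_cases hy : y = v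
  · subst y
    rcases (hin x).1 h with rfl | rfl
    · exact ⟨(Sum.inl ⟨_, hx⟩, Sum.inr false), rfl, rfl⟩
    · exact ⟨(Sum.inl ⟨_, hx⟩, Sum.inr true), rfl, rfl⟩
  exact ⟨(Sum.inl ⟨x, hx⟩, Sum.inl ⟨y, hy⟩), h, rfl⟩

theorem eq_inl_of_modifiedProj_eq {a : {x : V // x ≠ v}} {b : {x : V // x ≠ v} ⊕ Bool}
    (h : modifiedProj v b = modifiedProj v (Sum.inl a)) : b = Sum.inl a := by
  rcases b with b | b
  · exact congrArg Sum.inl (Subtype.ext h)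
  · exact absurd h.symm a.2

theorem indeg_modifiedRel_inr (hu1 : u1 ≠ v) (hu2 : u2 ≠ v) (b : Bool) :
    indeg (modifiedRel E v u1 u2 w1 w2) (Sum.inr b) = 1 := by
  rw [indeg, Set.ncard_eq_one]
  refine ⟨Sum.inl ⟨cond b u2 u1, by cases b <;> assumption⟩, Set.ext fun y => ?_⟩
  rcases y with y | (_ | _) <;> cases b <;> simp [modifiedRel, Subtype.ext_iff]

theorem outdeg_modifiedRel_inr (hw1 : w1 ≠ v) (hw2 : w2 ≠ v) (b : Bool) :
    outdeg (modifiedRel E v u1 u2 w1 w2) (Sum.inr b) = 1 := by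
  rw [outdeg, Set.ncard_eq_one]
  refine ⟨Sum.inl ⟨cond b w1 w2, by cases b <;> assumption⟩, Set.ext fun y => ?_⟩
  rcases y with y | (_ | _) <;> cases b <;> simp [modifiedRel, Subtype.ext_iff]

theorem connected_underlyingUG_modifiedRel (hdel : (delNode E v).Connected) (hw1 : w1 ≠ v)
    (hw2 : w2 ≠ v) : (underlyingUG (modifiedRel E v u1 u2 w1 w2)).Connected := by
  let G' := underlyingUG (modifiedRel E v u1 u2 w1 w2)
  let F : delNode E v →g G' :=
    { toFun := fun a => Sum.inl ⟨a.1, a.2⟩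
      map_rel' := fun ⟨hne, hE⟩ => ⟨fun h => hne (congrArg (modifiedProj v) h), hE⟩ }
  have hreach : ∀ y, G'.Reachable y (Sum.inl ⟨w2, hw2⟩) := by
    rintro (a | (_ | _))
    · exact (hdel.preconnected ⟨a.1, a.2⟩ ⟨w2, hw2⟩).map F
    · exact SimpleGraph.Adj.reachable ⟨Sum.inr_ne_inl, Or.inl rfl⟩
    · exact (SimpleGraph.Adj.reachable (G := G') (u := Sum.inr true) (v := Sum.inl ⟨w1, hw1⟩)
        ⟨Sum.inr_ne_inl, Or.inl rfl⟩).trans ((hdel.preconnected ⟨w1, hw1⟩ ⟨w2, hw2⟩).map F)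
  have : Nonempty ({x : V // x ≠ v} ⊕ Bool) := ⟨Sum.inr false⟩
  exact ⟨fun x y => (hreach x).trans (hreach y).symm⟩

end Modified

theorem modified_graph_eulerian_general {V : Type*} (E : V → V → Prop)
    (hloop : ∀ x : V, ¬ E x x)
    (heul : ∃ c : List V, IsEulerianCircuit E c)
    (v u1 u2 w1 w2 : V) (hu12 : u1 ≠ u2) (hw12 : w1 ≠ w2)
    (hin : {u : V | E u v} = {u1, u2}) (hout : {w : V | E v w} = {w1, w2})
    (hnotcut : ¬ IsCutNode (underlyingUG E) v) :
    (∀ x, indeg (modifiedRel E v u1 u2 w1 w2) x = outdeg (modifiedRel E v u1 u2 w1 w2) x) ∧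
    (underlyingUG (modifiedRel E v u1 u2 w1 w2)).Connected ∧
    ∀ c' : List ({x : V // x ≠ v} ⊕ Bool),
      IsEulerianCircuit (modifiedRel E v u1 u2 w1 w2) c' →
        IsEulerianCircuit E (c'.map (modifiedProj v)) := by
  obtain ⟨c, hc⟩ := heul
  have hin' : ∀ x, E x v ↔ x = u1 ∨ x = u2 := fun x => Set.ext_iff.1 hin x
  have hout' : ∀ x, E v x ↔ x = w1 ∨ x = w2 := fun x => Set.ext_iff.1 hout x
  have hu : u1 ≠ v ∧ u2 ≠ v := by
    constructor <;> rintro rfl <;> exact hloop _ ((hin' _).2 (by simp))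
  have hw : w1 ≠ v ∧ w2 ≠ v := by
    constructor <;> rintro rfl <;> exact hloop _ ((hout' _).2 (by simp))
  have hproj : Set.BijOn (Prod.map (modifiedProj v) (modifiedProj v))
      {p | modifiedRel E v u1 u2 w1 w2 p.1 p.2} {p | E p.1 p.2} :=
    ⟨mapsTo_modifiedProj hin' hout', injOn_modifiedProj hu12 hw12,
      surjOn_modifiedProj (hloop v) hin' hout'⟩
  refine ⟨?_, connected_underlyingUG_modifiedRel (not_not.1 hnotcut) hw.1 hw.2,
    fun c' hc' => hc'.map hproj⟩
  rintro (a | b)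
  · rw [indeg_eq_of_bijOn hproj fun _ => eq_inl_of_modifiedProj_eq,
      outdeg_eq_of_bijOn hproj fun _ => eq_inl_of_modifiedProj_eq]
    exact hc.indeg_eq_outdeg _
  · rw [indeg_modifiedRel_inr hu.1 hu.2, outdeg_modifiedRel_inr hw.1 hw.2]

/-- If `d(v) = 2` and `v` is not a cut node of `U(G)`, then `G'` is Eulerian (balanced
and weakly connected), and every Eulerian circuit of `G'` yields an Eulerian circuit of
`G` by replacing each traversal of `(u_i, v_i, w_j)` by `(u_i, v, w_j)`. -/
theorem modified_graph_eulerian {V : Type*} [Fintype V] (E : V → V → Prop)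
    (hloop : ∀ x : V, ¬ E x x) (hconn : (underlyingUG E).Connected)
    (heul : ∃ c : List V, IsEulerianCircuit E c)
    (v u1 u2 w1 w2 : V) (hu12 : u1 ≠ u2) (hw12 : w1 ≠ w2)
    (hin : {u : V | E u v} = {u1, u2}) (hout : {w : V | E v w} = {w1, w2})
    (hnotcut : ¬ IsCutNode (underlyingUG E) v) :
    (∀ x, indeg (modifiedRel E v u1 u2 w1 w2) x = outdeg (modifiedRel E v u1 u2 w1 w2) x) ∧
    (underlyingUG (modifiedRel E v u1 u2 w1 w2)).Connected ∧
    ∀ c' : List ({x : V // x ≠ v} ⊕ Bool),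
      IsEulerianCircuit (modifiedRel E v u1 u2 w1 w2) c' →
        IsEulerianCircuit E (c'.map (modifiedProj v)) :=
  modified_graph_eulerian_general E hloop heul v u1 u2 w1 w2 hu12 hw12 hin hout hnotcut
end
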